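/- arXiv:0812.3596 — 5 statements merged into one kernel-verified Lean document; each statement's English description precedes it below -/
import Mathlib

section
/- In a pre-Hilbert C*-bimodule M over unital C*-algebras A and B satisfying the compatibility condition ⟨x,x⟩_A · x = x · ⟨x,x⟩_B for all x ∈ M, the two norms ‖x‖_left := ‖⟨x,x⟩_A‖^{1/2} and ‖x‖_right := ‖⟨x,x⟩_B‖^{1/2} coincide. -/
/-!
Write `a = ⟨x,x⟩_A` and `b = ⟨x,x⟩_B`. For `p ≥ 0` in `A`, writing `p = e* e` gives
`⟨x, p·x⟩_B = ⟨e·x, e·x⟩_B ≥ 0`. Taking `p = ‖a‖ - a` and using `a·x = x·b`, this says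
`b² ≤ ‖a‖ b`, hence `‖b‖² = ‖b²‖ ≤ ‖a‖ ‖b‖` and `‖b‖ ≤ ‖a‖`. The mirror argument, with
`q = ‖b‖ - b` acting on the right, gives `‖a‖ ≤ ‖b‖`.
-/

/-- A pre-Hilbert C*-bimodule `M` over unital C*-algebras `A` (on the left) and
`B` (on the right): a left pre-Hilbert C*-module over `A` (inner product `innerL`,
`A`-linear in the first variable) and a right pre-Hilbert C*-module over `B`
(inner product `innerR`, `B`-linear in the second variable), with compatible
actions. -/
structure PreHilbertBimodule (A B M : Type*) [CStarAlgebra A] [CStarAlgebra B]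
    [AddCommGroup M] [Module ℂ M] where
  lsmul : A → M → M
  rsmul : M → B → M
  innerL : M → M → A
  innerR : M → M → B
  lsmul_dist : ∀ a x y, lsmul a (x + y) = lsmul a x + lsmul a y
  add_lsmul : ∀ a b x, lsmul (a + b) x = lsmul a x + lsmul b x
  mul_lsmul : ∀ a b x, lsmul (a * b) x = lsmul a (lsmul b x)
  one_lsmul : ∀ x, lsmul 1 x = x
  lsmul_csmul : ∀ (c : ℂ) a x, lsmul a (c • x) = c • lsmul a x
  csmul_lsmul : ∀ (c : ℂ) a x, lsmul (c • a) x = c • lsmul a x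
  rsmul_dist : ∀ x y b, rsmul (x + y) b = rsmul x b + rsmul y b
  rsmul_add : ∀ x a b, rsmul x (a + b) = rsmul x a + rsmul x b
  rsmul_mul : ∀ x a b, rsmul (rsmul x a) b = rsmul x (a * b)
  rsmul_one : ∀ x, rsmul x 1 = x
  rsmul_csmul : ∀ (c : ℂ) x b, rsmul (c • x) b = c • rsmul x b
  rsmul_calg : ∀ (c : ℂ) x b, rsmul x (c • b) = c • rsmul x b
  lsmul_rsmul : ∀ a x b, lsmul a (rsmul x b) = rsmul (lsmul a x) b
  innerR_add_right : ∀ x y z, innerR x (y + z) = innerR x y + innerR x z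
  innerR_rsmul_right : ∀ x y b, innerR x (rsmul y b) = innerR x y * b
  innerR_conj_symm : ∀ x y, innerR y x = star (innerR x y)
  innerR_csmul_right : ∀ (c : ℂ) x y, innerR x (c • y) = c • innerR x y
  innerR_self_pos : ∀ x, ∃ b, innerR x x = star b * b
  innerR_self_definite : ∀ x, innerR x x = 0 → x = 0
  innerL_add_left : ∀ x y z, innerL (x + y) z = innerL x z + innerL y z
  innerL_lsmul_left : ∀ a x y, innerL (lsmul a x) y = a * innerL x y
  innerL_conj_symm : ∀ x y, innerL y x = star (innerL x y)
  innerL_csmul_left : ∀ (c : ℂ) x y, innerL (c • x) y = c • innerL x y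
  innerL_self_pos : ∀ x, ∃ a, innerL x x = star a * a
  innerL_self_definite : ∀ x, innerL x x = 0 → x = 0
  innerR_lsmul : ∀ a x y, innerR x (lsmul a y) = innerR (lsmul (star a) x) y
  innerL_rsmul : ∀ x y b, innerL (rsmul x b) y = innerL x (rsmul y (star b))

/-- An imprimitivity (equivalence) Hilbert C*-bimodule over `A` and `B`: a
pre-Hilbert C*-bimodule that is full as a left and as a right Hilbert C*-module,
satisfies the imprimitivity condition `⟨x,y⟩_A·z = x·⟨y,z⟩_B`, and is complete
(for the common norm induced by the inner products). -/
structure ImprimitivityBimodule (A B M : Type*) [CStarAlgebra A] [CStarAlgebra B]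
    [AddCommGroup M] [Module ℂ M] extends PreHilbertBimodule A B M where
  imprimitivity : ∀ x y z, lsmul (innerL x y) z = rsmul x (innerR y z)
  fullL : closure (Submodule.span ℂ {a : A | ∃ x y : M, a = innerL x y} : Set A)
      = Set.univ
  fullR : closure (Submodule.span ℂ {b : B | ∃ x y : M, b = innerR x y} : Set B)
      = Set.univ
  complete : ∀ f : ℕ → M,
    (∀ ε > 0, ∃ N, ∀ m ≥ N, ∀ n ≥ N,
      ‖innerR (f m - f n) (f m - f n)‖ < ε) →
    ∃ x, ∀ ε > 0, ∃ N, ∀ n ≥ N, ‖innerR (f n - x) (f n - x)‖ < ε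

theorem IsSelfAdjoint.norm_le_of_mul_self_le_smul {A : Type*} [NonUnitalCStarAlgebra A]
    [PartialOrder A] [StarOrderedRing A] {b : A} (hb : IsSelfAdjoint b) {r : ℝ} (hr : 0 ≤ r)
    (h : b * b ≤ r • b) : ‖b‖ ≤ r := by
  have hsq : ‖b‖ * ‖b‖ ≤ r * ‖b‖ := by
    have hbb : 0 ≤ b * b := by simpa only [hb.star_eq] using star_mul_self_nonneg b
    calc ‖b‖ * ‖b‖ = ‖b * b‖ := by rw [← CStarRing.norm_star_mul_self, hb.star_eq]
      _ ≤ ‖r • b‖ := CStarAlgebra.norm_le_norm_of_nonneg_of_le hbb h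
      _ = r * ‖b‖ := by rw [norm_smul, Real.norm_of_nonneg hr]
  rcases (norm_nonneg b).eq_or_lt with hb0 | hbpos
  · rw [← hb0]; exact hr
  · exact le_of_mul_le_mul_right hsq hbpos

namespace PreHilbertBimodule

variable {A B M : Type*} [CStarAlgebra A] [CStarAlgebra B] [AddCommGroup M] [Module ℂ M]
  (H : PreHilbertBimodule A B M)

theorem lsmul_sub (a a' : A) (x : M) : H.lsmul (a - a') x = H.lsmul a x - H.lsmul a' x :=
  (AddMonoidHom.mk' (H.lsmul · x) fun a a' => H.add_lsmul a a' x).map_sub a a'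

theorem rsmul_sub (x : M) (b b' : B) : H.rsmul x (b - b') = H.rsmul x b - H.rsmul x b' :=
  (AddMonoidHom.mk' (H.rsmul x) (H.rsmul_add x)).map_sub b b'

theorem innerR_sub_right (x y z : M) : H.innerR x (y - z) = H.innerR x y - H.innerR x z :=
  (AddMonoidHom.mk' (H.innerR x) (H.innerR_add_right x)).map_sub y z

theorem innerL_add_right (x y z : M) : H.innerL x (y + z) = H.innerL x y + H.innerL x z := by
  rw [H.innerL_conj_symm, H.innerL_add_left, star_add, ← H.innerL_conj_symm,
    ← H.innerL_conj_symm]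

theorem innerL_sub_right (x y z : M) : H.innerL x (y - z) = H.innerL x y - H.innerL x z :=
  (AddMonoidHom.mk' (H.innerL x) (H.innerL_add_right x)).map_sub y z

theorem innerL_smul_right (c : ℂ) (x y : M) : H.innerL x (c • y) = star c • H.innerL x y := by
  rw [H.innerL_conj_symm, H.innerL_csmul_left, star_smul, ← H.innerL_conj_symm]

theorem innerL_lsmul_right (a : A) (x y : M) :
    H.innerL x (H.lsmul a y) = H.innerL x y * star a := by
  rw [H.innerL_conj_symm, H.innerL_lsmul_left, star_mul, ← H.innerL_conj_symm]

theorem lsmul_algebraMap (r : ℝ) (x : M) : H.lsmul (algebraMap ℝ A r) x = (r : ℂ) • x := by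
  rw [Algebra.algebraMap_eq_smul_one, ← Complex.coe_smul, H.csmul_lsmul, H.one_lsmul]

theorem rsmul_algebraMap (x : M) (r : ℝ) : H.rsmul x (algebraMap ℝ B r) = (r : ℂ) • x := by
  rw [Algebra.algebraMap_eq_smul_one, ← Complex.coe_smul, H.rsmul_calg, H.rsmul_one]

theorem isSelfAdjoint_innerL_self (x : M) : IsSelfAdjoint (H.innerL x x) :=
  (H.innerL_conj_symm x x).symm

theorem isSelfAdjoint_innerR_self (x : M) : IsSelfAdjoint (H.innerR x x) :=
  (H.innerR_conj_symm x x).symm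

section Order

variable [PartialOrder A] [StarOrderedRing A] [PartialOrder B] [StarOrderedRing B]

theorem innerR_lsmul_self_nonneg {p : A} (hp : 0 ≤ p) (x : M) :
    0 ≤ H.innerR x (H.lsmul p x) := by
  obtain ⟨e, rfl⟩ := CStarAlgebra.nonneg_iff_eq_star_mul_self.mp hp
  obtain ⟨d, hd⟩ := H.innerR_self_pos (H.lsmul e x)
  rw [H.mul_lsmul, H.innerR_lsmul, star_star, hd]
  exact star_mul_self_nonneg d

theorem innerL_rsmul_self_nonneg {q : B} (hq : 0 ≤ q) (x : M) :
    0 ≤ H.innerL x (H.rsmul x q) := by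
  obtain ⟨f, rfl⟩ := CStarAlgebra.nonneg_iff_eq_star_mul_self.mp hq
  obtain ⟨d, hd⟩ := H.innerL_self_pos (H.rsmul x (star f))
  have hf := H.innerL_rsmul x (H.rsmul x (star f)) (star f)
  rw [star_star, H.rsmul_mul] at hf
  rw [← hf, hd]
  exact star_mul_self_nonneg d

theorem innerR_self_mul_self_le {x : M}
    (hx : H.lsmul (H.innerL x x) x = H.rsmul x (H.innerR x x)) :
    H.innerR x x * H.innerR x x ≤ ‖H.innerL x x‖ • H.innerR x x := by
  have hp : 0 ≤ algebraMap ℝ A ‖H.innerL x x‖ - H.innerL x x :=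
    sub_nonneg.mpr (H.isSelfAdjoint_innerL_self x).le_algebraMap_norm_self
  have := H.innerR_lsmul_self_nonneg hp x
  rwa [H.lsmul_sub, H.lsmul_algebraMap, hx, H.innerR_sub_right, H.innerR_csmul_right,
    H.innerR_rsmul_right, Complex.coe_smul, sub_nonneg] at this

theorem innerL_self_mul_self_le {x : M}
    (hx : H.lsmul (H.innerL x x) x = H.rsmul x (H.innerR x x)) :
    H.innerL x x * H.innerL x x ≤ ‖H.innerR x x‖ • H.innerL x x := by
  have hq : 0 ≤ algebraMap ℝ B ‖H.innerR x x‖ - H.innerR x x :=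
    sub_nonneg.mpr (H.isSelfAdjoint_innerR_self x).le_algebraMap_norm_self
  have := H.innerL_rsmul_self_nonneg hq x
  rwa [H.rsmul_sub, H.rsmul_algebraMap, ← hx, H.innerL_sub_right, H.innerL_smul_right,
    H.innerL_lsmul_right, (H.isSelfAdjoint_innerL_self x).star_eq, Complex.star_def,
    Complex.conj_ofReal, Complex.coe_smul, sub_nonneg] at this

end Order

theorem norm_innerR_self_le {x : M}
    (hx : H.lsmul (H.innerL x x) x = H.rsmul x (H.innerR x x)) :
    ‖H.innerR x x‖ ≤ ‖H.innerL x x‖ := by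
  let := CStarAlgebra.spectralOrder A
  let := CStarAlgebra.spectralOrderedRing A
  let := CStarAlgebra.spectralOrder B
  let := CStarAlgebra.spectralOrderedRing B
  exact (H.isSelfAdjoint_innerR_self x).norm_le_of_mul_self_le_smul (norm_nonneg _)
    (H.innerR_self_mul_self_le hx)

theorem norm_innerL_self_le {x : M}
    (hx : H.lsmul (H.innerL x x) x = H.rsmul x (H.innerR x x)) :
    ‖H.innerL x x‖ ≤ ‖H.innerR x x‖ := by
  let := CStarAlgebra.spectralOrder A
  let := CStarAlgebra.spectralOrderedRing A
  let := CStarAlgebra.spectralOrder B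
  let := CStarAlgebra.spectralOrderedRing B
  exact (H.isSelfAdjoint_innerL_self x).norm_le_of_mul_self_le_smul (norm_nonneg _)
    (H.innerL_self_mul_self_le hx)

end PreHilbertBimodule

/-- In a pre-Hilbert C*-bimodule `M` over `A` and `B` satisfying
`⟨x,x⟩_A·x = x·⟨x,x⟩_B` for all `x`, the two natural norms
`‖x‖ = √‖⟨x,x⟩_A‖` and `‖x‖ = √‖⟨x,x⟩_B‖` coincide. -/
theorem preHilbertBimodule_norms_eq
    {A B M : Type*} [CStarAlgebra A] [CStarAlgebra B]
    [AddCommGroup M] [Module ℂ M]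
    (H : PreHilbertBimodule A B M)
    (hcompat : ∀ x : M, H.lsmul (H.innerL x x) x = H.rsmul x (H.innerR x x)) :
    ∀ x : M, Real.sqrt ‖H.innerL x x‖ = Real.sqrt ‖H.innerR x x‖ := by
  intro x
  rw [le_antisymm (H.norm_innerL_self_le (hcompat x)) (H.norm_innerR_self_le (hcompat x))]
end

section
/- Let M be an imprimitivity Hilbert C*-bimodule over commutative unital C*-algebras A and B, and let wⱼ, zⱼ ∈ M be finite families with Σⱼ⟨wⱼ,zⱼ⟩_B = 1_B. Then the map φ(a) := Σⱼ⟨wⱼ, a·zⱼ⟩_B is independent of the choice of the families wⱼ, zⱼ. -/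
/-!
Since `A` is commutative, the imprimitivity condition lets `a` pass across a product of
`B`-valued inner products: `⟨u, a·v⟩⟨u', v'⟩ = ⟨u, ⟨v, u'⟩_A a·v'⟩ = ⟨u, v⟩⟨u', a·v'⟩`.
Multiplying `Σⱼ⟨wⱼ, a·zⱼ⟩` by `1 = Σₖ⟨w'ₖ, z'ₖ⟩` and applying this termwise moves `a` onto
the primed family, after which `Σⱼ⟨wⱼ, zⱼ⟩ = 1` removes the unprimed one.
-/

theorem Finset.sum_eq_sum_of_mul_eq_mul {R ι κ : Type*} [NonAssocSemiring R]
    {s : Finset ι} {t : Finset κ} {p q : ι → R} {p' q' : κ → R}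
    (hq : ∑ i ∈ s, q i = 1) (hq' : ∑ k ∈ t, q' k = 1)
    (h : ∀ i k, p i * q' k = q i * p' k) :
    ∑ i ∈ s, p i = ∑ k ∈ t, p' k :=
  calc ∑ i ∈ s, p i = (∑ i ∈ s, p i) * ∑ k ∈ t, q' k := by rw [hq', mul_one]
    _ = (∑ i ∈ s, q i) * ∑ k ∈ t, p' k := by simp only [Finset.sum_mul_sum, h]
    _ = ∑ k ∈ t, p' k := by rw [hq, one_mul]

namespace ImprimitivityBimodule

theorem innerR_lsmul_mul_innerR {A B M : Type*} [CommCStarAlgebra A] [CStarAlgebra B]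
    [AddCommGroup M] [Module ℂ M] (H : ImprimitivityBimodule A B M) (a : A) (u v u' v' : M) :
    H.innerR u (H.lsmul a v) * H.innerR u' v' = H.innerR u v * H.innerR u' (H.lsmul a v') :=
  calc H.innerR u (H.lsmul a v) * H.innerR u' v'
      = H.innerR u (H.lsmul a (H.rsmul v (H.innerR u' v'))) := by
        rw [H.lsmul_rsmul, H.innerR_rsmul_right]
    _ = H.innerR u (H.lsmul (a * H.innerL v u') v') := by rw [← H.imprimitivity, H.mul_lsmul]
    _ = H.innerR u (H.lsmul (H.innerL v u' * a) v') := by rw [mul_comm]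
    _ = H.innerR u v * H.innerR u' (H.lsmul a v') := by
        rw [H.mul_lsmul, H.imprimitivity, H.innerR_rsmul_right]

end ImprimitivityBimodule

/-- For an imprimitivity Hilbert C*-bimodule `M` over commutative unital C*-algebras
`A` and `B`, the map `a ↦ Σⱼ⟨wⱼ, a·zⱼ⟩_B`, for finite families with
`Σⱼ⟨wⱼ,zⱼ⟩_B = 1`, is independent of the choice of the families. -/
theorem canonical_map_well_defined
    {A B M : Type*} [CommCStarAlgebra A] [CommCStarAlgebra B]
    [AddCommGroup M] [Module ℂ M]
    (H : ImprimitivityBimodule A B M)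
    {n m : ℕ} (w z : Fin n → M) (w' z' : Fin m → M)
    (hwz : (∑ j, H.innerR (w j) (z j)) = 1)
    (hwz' : (∑ k, H.innerR (w' k) (z' k)) = 1) :
    ∀ a : A, (∑ j, H.innerR (w j) (H.lsmul a (z j)))
      = ∑ k, H.innerR (w' k) (H.lsmul a (z' k)) :=
  fun a => Finset.sum_eq_sum_of_mul_eq_mul hwz hwz' fun j k =>
    H.innerR_lsmul_mul_innerR a (w j) (z j) (w' k) (z' k)
end

section
/- Let M be an imprimitivity Hilbert C*-bimodule over commutative unital C*-algebras A and B, and define φ_M(a) := Σⱼ⟨wⱼ, a·zⱼ⟩_B where Σⱼ⟨wⱼ,zⱼ⟩_B = 1_B. Then φ_M: A → B is a unital *-homomorphism: it is linear, multiplicative, unital, and satisfies φ_M(a*) = φ_M(a)*. -/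
namespace PreHilbertBimodule

variable {A B M : Type*} [CStarAlgebra A] [CStarAlgebra B] [AddCommGroup M] [Module ℂ M]
  (H : PreHilbertBimodule A B M)

theorem lsmul_sum {ι : Type*} (a : A) (s : Finset ι) (f : ι → M) :
    H.lsmul a (∑ i ∈ s, f i) = ∑ i ∈ s, H.lsmul a (f i) :=
  map_sum (AddMonoidHom.mk' (H.lsmul a) (H.lsmul_dist a)) f s

theorem rsmul_sum {ι : Type*} (x : M) (s : Finset ι) (f : ι → B) :
    H.rsmul x (∑ i ∈ s, f i) = ∑ i ∈ s, H.rsmul x (f i) :=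
  map_sum (AddMonoidHom.mk' (H.rsmul x) (H.rsmul_add x)) f s

theorem innerR_rsmul_left (x y : M) (b : B) :
    H.innerR (H.rsmul x b) y = star b * H.innerR x y := by
  rw [H.innerR_conj_symm, H.innerR_rsmul_right, star_mul, ← H.innerR_conj_symm]

end PreHilbertBimodule

namespace ImprimitivityBimodule

variable {A B M : Type*} [CommCStarAlgebra A] [CStarAlgebra B] [AddCommGroup M] [Module ℂ M]
  (H : ImprimitivityBimodule A B M)

theorem rsmul_innerR_lsmul (a : A) (x y z : M) :
    H.rsmul x (H.innerR y (H.lsmul a z)) = H.lsmul a (H.rsmul x (H.innerR y z)) := by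
  rw [← H.imprimitivity, ← H.mul_lsmul, mul_comm, H.mul_lsmul, H.imprimitivity]

variable {ι : Type*} [Fintype ι]

def canonicalMap (w z : ι → M) (a : A) : B :=
  ∑ j, H.innerR (w j) (H.lsmul a (z j))

variable {H} {w z : ι → M}

theorem rsmul_canonicalMap (hwz : ∑ j, H.innerR (w j) (z j) = 1) (a : A) (x : M) :
    H.rsmul x (H.canonicalMap w z a) = H.lsmul a x := by
  simp only [canonicalMap, H.rsmul_sum, H.rsmul_innerR_lsmul]
  rw [← H.lsmul_sum, ← H.rsmul_sum, hwz, H.rsmul_one]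

theorem canonicalMap_add (a a' : A) :
    H.canonicalMap w z (a + a') = H.canonicalMap w z a + H.canonicalMap w z a' := by
  simp only [canonicalMap, H.add_lsmul, H.innerR_add_right, Finset.sum_add_distrib]

theorem canonicalMap_smul (c : ℂ) (a : A) :
    H.canonicalMap w z (c • a) = c • H.canonicalMap w z a := by
  simp only [canonicalMap, H.csmul_lsmul, H.innerR_csmul_right, Finset.smul_sum]

theorem canonicalMap_one (hwz : ∑ j, H.innerR (w j) (z j) = 1) :
    H.canonicalMap w z 1 = 1 := by
  simp only [canonicalMap, H.one_lsmul, hwz]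

theorem canonicalMap_mul (hwz : ∑ j, H.innerR (w j) (z j) = 1) (a a' : A) :
    H.canonicalMap w z (a * a') = H.canonicalMap w z a * H.canonicalMap w z a' := by
  have hterm (j : ι) : H.innerR (w j) (H.lsmul (a * a') (z j))
      = H.innerR (w j) (H.lsmul a (z j)) * H.canonicalMap w z a' := by
    rw [H.mul_lsmul, ← rsmul_canonicalMap hwz a' (z j), H.lsmul_rsmul, H.innerR_rsmul_right]
  rw [canonicalMap, Finset.sum_congr rfl fun j _ => hterm j, ← Finset.sum_mul]
  rfl

theorem canonicalMap_star (hwz : ∑ j, H.innerR (w j) (z j) = 1) (a : A) :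
    H.canonicalMap w z (star a) = star (H.canonicalMap w z a) := by
  have hterm (j : ι) : H.innerR (w j) (H.lsmul (star a) (z j))
      = star (H.canonicalMap w z a) * H.innerR (w j) (z j) := by
    rw [H.innerR_lsmul, star_star, ← rsmul_canonicalMap hwz a (w j), H.innerR_rsmul_left]
  rw [canonicalMap, Finset.sum_congr rfl fun j _ => hterm j, ← Finset.mul_sum, hwz, mul_one]

def canonicalStarAlgHom (hwz : ∑ j, H.innerR (w j) (z j) = 1) : A →⋆ₐ[ℂ] B where
  toFun := H.canonicalMap w z
  map_one' := canonicalMap_one hwz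
  map_mul' := canonicalMap_mul hwz
  map_zero' := by simpa using canonicalMap_smul (H := H) (w := w) (z := z) 0 0
  map_add' := canonicalMap_add
  commutes' c := by
    simp only [Algebra.algebraMap_eq_smul_one, canonicalMap_smul, canonicalMap_one hwz]
  map_star' := canonicalMap_star hwz

end ImprimitivityBimodule

/-- For an imprimitivity Hilbert C*-bimodule `M` over commutative unital C*-algebras
`A` and `B`, the canonical map `φ_M(a) := Σⱼ⟨wⱼ, a·zⱼ⟩_B` (for a finite family with
`Σⱼ⟨wⱼ,zⱼ⟩_B = 1`) is a unital *-homomorphism: linear, multiplicative, unital and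
involutive. -/
theorem canonical_map_star_hom
    {A B M : Type*} [CommCStarAlgebra A] [CommCStarAlgebra B]
    [AddCommGroup M] [Module ℂ M]
    (H : ImprimitivityBimodule A B M)
    {n : ℕ} (w z : Fin n → M)
    (hwz : (∑ j, H.innerR (w j) (z j)) = 1)
    (φ : A → B) (hφ : ∀ a, φ a = ∑ j, H.innerR (w j) (H.lsmul a (z j))) :
    (∀ a a' : A, φ (a + a') = φ a + φ a') ∧
    (∀ (c : ℂ) (a : A), φ (c • a) = c • φ a) ∧
    (∀ a a' : A, φ (a * a') = φ a * φ a') ∧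
    φ 1 = 1 ∧
    (∀ a : A, φ (star a) = star (φ a)) := by
  obtain rfl : φ = H.canonicalStarAlgHom hwz := funext hφ
  exact ⟨map_add _, map_smul _, map_mul _, map_one _, map_star _⟩
end

section
/- A C*-category C is full (i.e. each hom-bimodule C(B,A) is an imprimitivity bimodule over the unital C*-algebras C(A,A) and C(B,B)) if and only if for all objects A, B, C, the closure of the span of composites C(B,A)∘C(C,B) equals C(C,A). -/
/-- A (unital) C*-category with object type `Obj` and hom-spaces `Hom A B`
(morphisms from `A` to `B`, composition written diagrammatically): each hom-set is a
complex Banach space, composition is bilinear and submultiplicative, and there is an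
antilinear involutive contravariant `*`-operation with the C*-property
`‖x*∘x‖ = ‖x‖²` and `x*∘x` positive in the C*-algebra `Hom A A`. -/
structure CStarCategoryStruct (Obj : Type*) (Hom : Obj → Obj → Type*)
    [∀ A B, NormedAddCommGroup (Hom A B)] [∀ A B, Module ℂ (Hom A B)] where
  comp : ∀ {A B C : Obj}, Hom A B → Hom B C → Hom A C
  id : ∀ A : Obj, Hom A A
  star' : ∀ {A B : Obj}, Hom A B → Hom B A
  comp_assoc : ∀ {A B C D : Obj} (x : Hom A B) (y : Hom B C) (z : Hom C D),
    comp (comp x y) z = comp x (comp y z)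
  id_comp : ∀ {A B : Obj} (x : Hom A B), comp (id A) x = x
  comp_id : ∀ {A B : Obj} (x : Hom A B), comp x (id B) = x
  comp_add : ∀ {A B C : Obj} (x : Hom A B) (y z : Hom B C),
    comp x (y + z) = comp x y + comp x z
  add_comp : ∀ {A B C : Obj} (x y : Hom A B) (z : Hom B C),
    comp (x + y) z = comp x z + comp y z
  comp_smul : ∀ {A B C : Obj} (c : ℂ) (x : Hom A B) (y : Hom B C),
    comp x (c • y) = c • comp x y
  smul_comp : ∀ {A B C : Obj} (c : ℂ) (x : Hom A B) (y : Hom B C),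
    comp (c • x) y = c • comp x y
  norm_comp_le : ∀ {A B C : Obj} (x : Hom A B) (y : Hom B C),
    ‖comp x y‖ ≤ ‖x‖ * ‖y‖
  star_star : ∀ {A B : Obj} (x : Hom A B), star' (star' x) = x
  star_comp : ∀ {A B C : Obj} (x : Hom A B) (y : Hom B C),
    star' (comp x y) = comp (star' y) (star' x)
  star_add : ∀ {A B : Obj} (x y : Hom A B), star' (x + y) = star' x + star' y
  star_smul : ∀ {A B : Obj} (c : ℂ) (x : Hom A B),
    star' (c • x) = (starRingEnd ℂ c) • star' x
  norm_star_comp_self : ∀ {A B : Obj} (x : Hom A B), ‖comp (star' x) x‖ = ‖x‖ ^ 2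
  star_comp_self_pos : ∀ {A B : Obj} (x : Hom A B),
    ∃ y : Hom B B, comp (star' x) x = comp (star' y) y
  complete : ∀ A B : Obj, CompleteSpace (Hom A B)

variable {Obj : Type*} {Hom : Obj → Obj → Type*}
  [∀ A B, NormedAddCommGroup (Hom A B)] [∀ A B, Module ℂ (Hom A B)]

/-- A C*-category is *full* if every hom-bimodule `Hom A B` is an imprimitivity
bimodule over the unital C*-algebras `Hom A A` and `Hom B B`, i.e. it is full both
as a right Hilbert `Hom B B`-module (inner product `⟨x,y⟩ = x*∘y`) and as a left
Hilbert `Hom A A`-module (inner product `⟨x,y⟩ = x∘y*`); the imprimitivity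
condition holds automatically by associativity. -/
def CStarCategoryStruct.IsFull (C : CStarCategoryStruct Obj Hom) : Prop :=
  ∀ A B : Obj,
    closure (Submodule.span ℂ
        {b : Hom B B | ∃ x y : Hom A B, b = C.comp (C.star' x) y} : Set (Hom B B))
      = Set.univ ∧
    closure (Submodule.span ℂ
        {a : Hom A A | ∃ x y : Hom A B, a = C.comp x (C.star' y)} : Set (Hom A A))
      = Set.univ


/-!
Fullness of `Hom A B` as a left Hilbert module over `Hom A A` says that `id A` lies in the
closed span of the composites `x ∘ y*` with `x y : Hom A B`, that is of the composites
`A → B → A`. Composing on the right with any `z : Hom A C'` then puts `z` in the closed span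
of the composites `A → B → C'`. Conversely, since `*` is an involution the inner-product sets
are exactly the composites `B → A → B` and `A → B → A`.
-/

namespace CStarCategoryStruct

variable (C : CStarCategoryStruct Obj Hom)

def composites (A B D : Obj) : Set (Hom A D) :=
  {z | ∃ (x : Hom A B) (y : Hom B D), z = C.comp x y}

def compRightCLM {A B : Obj} (D : Obj) (z : Hom B D) : Hom A B →L[ℂ] Hom A D :=
  LinearMap.mkContinuous
    { toFun := fun a => C.comp a z
      map_add' := fun a b => C.add_comp a b z
      map_smul' := fun c a => C.smul_comp c a z }
    ‖z‖ fun a => (C.norm_comp_le a z).trans_eq (mul_comm _ _)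

theorem setOf_star_comp_eq_composites (A B : Obj) :
    {b : Hom B B | ∃ x y : Hom A B, b = C.comp (C.star' x) y} = C.composites B A B := by
  ext b
  constructor
  · rintro ⟨x, y, rfl⟩
    exact ⟨C.star' x, y, rfl⟩
  · rintro ⟨x, y, rfl⟩
    exact ⟨C.star' x, y, by rw [C.star_star]⟩

theorem setOf_comp_star_eq_composites (A B : Obj) :
    {a : Hom A A | ∃ x y : Hom A B, a = C.comp x (C.star' y)} = C.composites A B A := by
  ext a
  constructor
  · rintro ⟨x, y, rfl⟩
    exact ⟨x, C.star' y, rfl⟩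
  · rintro ⟨x, y, rfl⟩
    exact ⟨x, C.star' y, by rw [C.star_star]⟩

theorem comp_mem_closure_span_composites {A B D E : Obj} {a : Hom A D}
    (ha : a ∈ closure (Submodule.span ℂ (C.composites A B D) : Set (Hom A D)))
    (z : Hom D E) :
    C.comp a z ∈ closure (Submodule.span ℂ (C.composites A B E) : Set (Hom A E)) := by
  have hspan :
      (Submodule.span ℂ (C.composites A B D)).map (C.compRightCLM (A := A) E z).toLinearMap ≤ Submodule.span ℂ (C.composites A B E) := by
    rw [Submodule.map_span_le]
    rintro _ ⟨x, y, rfl⟩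
    exact Submodule.subset_span ⟨x, C.comp y z, C.comp_assoc x y z⟩
  exact map_mem_closure (f := C.compRightCLM E z) (C.compRightCLM E z).continuous ha
    fun b hb => hspan (Submodule.mem_map_of_mem hb)

end CStarCategoryStruct

/-- A C*-category is full if and only if for all objects `A`, `B`, `C` the closed
linear span of the composites of morphisms `A → B` with morphisms `B → C` is the
whole space of morphisms `A → C`. -/
theorem isFull_iff_comp_dense (C : CStarCategoryStruct Obj Hom) :
    C.IsFull ↔
      ∀ A B C' : Obj,
        closure (Submodule.span ℂ
            {z : Hom A C' | ∃ (x : Hom A B) (y : Hom B C'), z = C.comp x y} :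
          Set (Hom A C')) = Set.univ := by
  constructor
  · intro hFull A B C'
    have hid : C.id A ∈ closure (Submodule.span ℂ (C.composites A B A) : Set (Hom A A)) := by
      rw [← C.setOf_comp_star_eq_composites, (hFull A B).2]
      trivial
    refine Set.eq_univ_of_forall fun z => ?_
    have hz := C.comp_mem_closure_span_composites hid z
    rwa [C.id_comp] at hz
  · intro hDense A B
    rw [C.setOf_star_comp_eq_composites, C.setOf_comp_star_eq_composites]
    exact ⟨hDense B A B, hDense A B A⟩
end

section
/- Let M be an imprimitivity Hilbert C*-bimodule over unital C*-algebras A and B (with A, B commutative so the canonical isomorphism exists), and let α ∈ A, β ∈ B be the elements satisfying φ_M(⟨x,y⟩_A) = ⟨y, α·x⟩_B and ψ_M(⟨x,y⟩_B) = ⟨y·β, x⟩_A for all x,y ∈ M, where ψ_M = φ_M⁻¹. Then α·x·β = x for all x ∈ M, and consequently φ_M(α)·β = 1_B and ψ_M(β)·α = 1_A. -/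
namespace PreHilbertBimodule

variable {A B M : Type*} [CStarAlgebra A] [CStarAlgebra B] [AddCommGroup M] [Module ℂ M]
  (P : PreHilbertBimodule A B M)

theorem innerL_sub_left (x y z : M) : P.innerL (x - y) z = P.innerL x z - P.innerL y z := by
  rw [sub_eq_add_neg, ← neg_one_smul ℂ y, P.innerL_add_left, P.innerL_csmul_left, neg_one_smul,
    ← sub_eq_add_neg]

theorem eq_of_innerL_eq {x y : M} (h : ∀ z, P.innerL x z = P.innerL y z) : x = y :=
  sub_eq_zero.mp <| P.innerL_self_definite _ <| by rw [P.innerL_sub_left, h, sub_self]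

theorem rsmul_lsmul_eq_self {φ : A → B} {ψ : B → A} (hψφ : ∀ a, ψ (φ a) = a) {α : A} {β : B}
    (hα : ∀ x y, φ (P.innerL x y) = P.innerR y (P.lsmul α x))
    (hβ : ∀ x y, ψ (P.innerR x y) = P.innerL (P.rsmul y β) x) (x : M) :
    P.rsmul (P.lsmul α x) β = x :=
  P.eq_of_innerL_eq fun z => by rw [← hβ, ← hα, hψφ]

theorem sum_innerR_mul {ι : Type*} (s : Finset ι) (w z : ι → M) (b : B) :
    (∑ j ∈ s, P.innerR (w j) (z j)) * b = ∑ j ∈ s, P.innerR (w j) (P.rsmul (z j) b) := by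
  simp only [Finset.sum_mul, P.innerR_rsmul_right]

theorem mul_sum_innerL {ι : Type*} (s : Finset ι) (t u : ι → M) (a : A) :
    a * ∑ i ∈ s, P.innerL (t i) (u i) = ∑ i ∈ s, P.innerL (P.lsmul a (t i)) (u i) := by
  simp only [Finset.mul_sum, P.innerL_lsmul_left]

end PreHilbertBimodule

theorem alpha_beta_relations_general
    {A B M : Type*} [CommCStarAlgebra A] [CommCStarAlgebra B]
    [AddCommGroup M] [Module ℂ M]
    (H : ImprimitivityBimodule A B M)
    {n m : ℕ} (w z : Fin n → M) (t u : Fin m → M)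
    (hwz : (∑ j, H.innerR (w j) (z j)) = 1)
    (htu : (∑ i, H.innerL (t i) (u i)) = 1)
    (φ : A → B) (hφ : ∀ a, φ a = ∑ j, H.innerR (w j) (H.lsmul a (z j)))
    (ψ : B → A) (hψ : ∀ b, ψ b = ∑ i, H.innerL (H.rsmul (t i) b) (u i))
    (hψφ : ∀ a : A, ψ (φ a) = a)
    (α : A) (hα : ∀ x y : M, φ (H.innerL x y) = H.innerR y (H.lsmul α x))
    (β : B) (hβ : ∀ x y : M, ψ (H.innerR x y) = H.innerL (H.rsmul y β) x) :
    (∀ x : M, H.rsmul (H.lsmul α x) β = x) ∧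
    φ α * β = 1 ∧
    ψ β * α = 1 := by
  have cancel := H.rsmul_lsmul_eq_self hψφ hα hβ
  refine ⟨cancel, ?_, ?_⟩
  · rw [hφ, H.sum_innerR_mul]
    simpa only [cancel] using hwz
  · rw [mul_comm, hψ, H.mul_sum_innerL]
    simpa only [H.lsmul_rsmul, cancel] using htu

/-- Let `M` be an imprimitivity Hilbert C*-bimodule over commutative unital
C*-algebras `A` and `B`, with canonical isomorphism `φ_M` (inverse `ψ_M`), and let
`α ∈ A`, `β ∈ B` satisfy `φ_M(⟨x,y⟩_A) = ⟨y, α·x⟩_B` and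
`ψ_M(⟨x,y⟩_B) = ⟨y·β, x⟩_A` for all `x, y ∈ M`.  Then `α·x·β = x` for all `x ∈ M`,
and consequently `φ_M(α)·β = 1_B` and `ψ_M(β)·α = 1_A`. -/
theorem alpha_beta_relations
    {A B M : Type*} [CommCStarAlgebra A] [CommCStarAlgebra B]
    [AddCommGroup M] [Module ℂ M]
    (H : ImprimitivityBimodule A B M)
    {n m : ℕ} (w z : Fin n → M) (t u : Fin m → M)
    (hwz : (∑ j, H.innerR (w j) (z j)) = 1)
    (htu : (∑ i, H.innerL (t i) (u i)) = 1)
    (φ : A → B) (hφ : ∀ a, φ a = ∑ j, H.innerR (w j) (H.lsmul a (z j)))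
    (ψ : B → A) (hψ : ∀ b, ψ b = ∑ i, H.innerL (H.rsmul (t i) b) (u i))
    (hψφ : ∀ a : A, ψ (φ a) = a) (hφψ : ∀ b : B, φ (ψ b) = b)
    (hax : ∀ (a : A) (x : M), H.lsmul a x = H.rsmul x (φ a))
    (α : A) (hα : ∀ x y : M, φ (H.innerL x y) = H.innerR y (H.lsmul α x))
    (β : B) (hβ : ∀ x y : M, ψ (H.innerR x y) = H.innerL (H.rsmul y β) x) :
    (∀ x : M, H.rsmul (H.lsmul α x) β = x) ∧
    φ α * β = 1 ∧
    ψ β * α = 1 :=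
  alpha_beta_relations_general H w z t u hwz htu φ hφ ψ hψ hψφ α hα β hβ
end
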